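/- Let 2 ≤ n, let 2π/n ≤ t ≤ π, set τ = ⌊π/t⌋ (so τ ≤ n/2), and let (a_{n,k})_{k=0}^n be a nonnegative sequence belonging to MHBVS with uniform constant K, i.e. ∑_{k=0}^{n-m-1} |a_{n,k} - a_{n,k+1}| ≤ K/(m+1) ∑_{k=n-m}^n a_{n,k} for all 0 ≤ m < n. Then there exists a constant C (depending only on K) such that |∑_{k=0}^n a_{n,k} D_k(t)| ≤ C · t^{-1} · ∑_{k=n-2τ}^n a_{n,k}. -/

import Mathlib

/-!
Write `D_k(t) = 1/2 + ∑_{ν=1}^k cos νt`. For `0 < t ≤ π` one has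
`2 sin(t/2) D_k(t) = sin((k + 1/2)t)` and `4 sin²(t/2) ∑_{k<m} D_k(t) = 1 - cos mt`, so with
`sin(t/2) ≥ t/π` the kernels are `O(1/t)` and their partial sums `O(1/t²)`. Split the sum at
`M = n - τ`. On the tail `k ≥ M` bound each kernel by `π/(2t)`. On the head, Abel summation
gives `O(1/t²)` times `a_{M-1}` plus the variation `V = ∑_{k<M} |a_k - a_{k+1}|`; the MHBVS
condition with `m = τ` gives `(τ+1)V ≤ K S`, where `S = ∑_{k=n-2τ}^n a_k`, and averaging
`a_{M-1} ≤ a_j + V` over the `τ + 1` indices `n - 2τ ≤ j ≤ M` gives `(τ+1) a_{M-1} ≤ S + (τ+1)V`.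
Since `π ≤ t(τ+1)`, the head is also `O(S/t)`.
-/

open Finset Real

noncomputable def dirichletKernel (t : ℝ) (k : ℕ) : ℝ := 1 / 2 + ∑ ν ∈ Icc 1 k, cos (ν * t)

lemma two_mul_sin_half_mul_dirichletKernel (t : ℝ) (k : ℕ) :
    2 * sin (t / 2) * dirichletKernel t k = sin (k * t + t / 2) := by
  induction k with
  | zero =>
    rw [dirichletKernel, Icc_eq_empty (by omega), sum_empty, Nat.cast_zero, zero_mul, zero_add]
    ring
  | succ k ih =>
    have h : sin ((k + 1 : ℝ) * t + t / 2) - sin (k * t + t / 2)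
        = 2 * sin (t / 2) * cos ((k + 1 : ℝ) * t) := by
      rw [sin_sub_sin]; ring_nf
    rw [dirichletKernel] at ih
    rw [dirichletKernel, sum_Icc_succ_top (by omega)]
    push_cast at h ⊢
    linear_combination ih - h

lemma four_mul_sin_half_sq_mul_sum_dirichletKernel (t : ℝ) (m : ℕ) :
    4 * sin (t / 2) ^ 2 * ∑ k ∈ range m, dirichletKernel t k = 1 - cos (m * t) := by
  have hstep : ∀ k : ℕ, 4 * sin (t / 2) ^ 2 * dirichletKernel t k
      = cos (k * t) - cos ((k + 1 : ℕ) * t) := by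
    intro k
    have h := two_mul_sin_half_mul_dirichletKernel t k
    rw [Nat.cast_succ, cos_sub_cos, show (k * t + (k + 1) * t) / 2 = k * t + t / 2 by ring,
      show (k * t - (k + 1) * t) / 2 = -(t / 2) by ring, sin_neg]
    linear_combination (2 * sin (t / 2)) * h
  rw [mul_sum, sum_congr rfl fun k _ => hstep k, sum_range_sub']
  simp

lemma le_pi_mul_sin_half {t : ℝ} (ht₀ : 0 ≤ t) (htπ : t ≤ π) : t ≤ π * sin (t / 2) :=
  calc t = π * (2 / π * (t / 2)) := by field_simp
    _ ≤ π * sin (t / 2) := by gcongr; exact mul_le_sin (by linarith) (by linarith)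

lemma abs_dirichletKernel_le {t : ℝ} (ht₀ : 0 < t) (htπ : t ≤ π) (k : ℕ) :
    |dirichletKernel t k| ≤ π / (2 * t) := by
  have hsin := le_pi_mul_sin_half ht₀.le htπ
  have hD : 2 * sin (t / 2) * |dirichletKernel t k| ≤ 1 := by
    have hs : 0 ≤ sin (t / 2) := sin_nonneg_of_nonneg_of_le_pi (by linarith) (by linarith)
    rw [← abs_of_nonneg (by positivity : 0 ≤ 2 * sin (t / 2)), ← abs_mul,
      two_mul_sin_half_mul_dirichletKernel]
    exact abs_sin_le_one _
  rw [le_div_iff₀ (by positivity)]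
  calc |dirichletKernel t k| * (2 * t) ≤ |dirichletKernel t k| * (2 * (π * sin (t / 2))) := by
        gcongr
    _ = π * (2 * sin (t / 2) * |dirichletKernel t k|) := by ring
    _ ≤ π := mul_le_of_le_one_right pi_pos.le hD

lemma abs_sum_range_dirichletKernel_le {t : ℝ} (ht₀ : 0 < t) (htπ : t ≤ π) (m : ℕ) :
    |∑ k ∈ range m, dirichletKernel t k| ≤ π ^ 2 / (2 * t ^ 2) := by
  have hsin := le_pi_mul_sin_half ht₀.le htπ
  have hG : 4 * sin (t / 2) ^ 2 * |∑ k ∈ range m, dirichletKernel t k| ≤ 2 := by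
    rw [← abs_of_nonneg (by positivity : 0 ≤ 4 * sin (t / 2) ^ 2), ← abs_mul,
      four_mul_sin_half_sq_mul_sum_dirichletKernel, abs_le]
    constructor <;> linarith [neg_one_le_cos (m * t), cos_le_one (m * t)]
  rw [le_div_iff₀ (by positivity)]
  calc |∑ k ∈ range m, dirichletKernel t k| * (2 * t ^ 2)
      ≤ |∑ k ∈ range m, dirichletKernel t k| * (2 * (π * sin (t / 2)) ^ 2) := by gcongr
    _ = π ^ 2 / 2 * (4 * sin (t / 2) ^ 2 * |∑ k ∈ range m, dirichletKernel t k|) := by ring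
    _ ≤ π ^ 2 / 2 * 2 := by gcongr
    _ = π ^ 2 := by ring

lemma norm_sum_range_smul_le_of_norm_sum_range_le {E : Type*} [NormedAddCommGroup E]
    [NormedSpace ℝ E] (f : ℕ → ℝ) {z : ℕ → E} {b : ℝ}
    (hz : ∀ i, ‖∑ j ∈ range i, z j‖ ≤ b) (n : ℕ) :
    ‖∑ i ∈ range n, f i • z i‖ ≤
      (|f (n - 1)| + ∑ i ∈ range (n - 1), |f i - f (i + 1)|) * b := by
  rw [sum_range_by_parts, add_mul, sum_mul]
  refine (norm_sub_le _ _).trans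
    (add_le_add ?_ ((norm_sum_le _ _).trans (sum_le_sum fun i _ => ?_)))
  · rw [norm_smul, Real.norm_eq_abs]
    exact mul_le_mul_of_nonneg_left (hz n) (abs_nonneg _)
  · rw [norm_smul, Real.norm_eq_abs, abs_sub_comm]
    exact mul_le_mul_of_nonneg_left (hz (i + 1)) (abs_nonneg _)

lemma abs_sub_le_sum_range_abs_sub_succ (a : ℕ → ℝ) {M p q : ℕ} (hp : p ≤ M) (hq : q ≤ M) :
    |a p - a q| ≤ ∑ k ∈ range M, |a k - a (k + 1)| := by
  wlog hpq : p ≤ q generalizing p q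
  · rw [abs_sub_comm]; exact this hq hp (by omega)
  simp only [← Real.dist_eq]
  refine (dist_le_Ico_sum_dist a hpq).trans
    (sum_le_sum_of_subset_of_nonneg ?_ fun _ _ _ => dist_nonneg)
  intro k hk
  simp only [mem_Ico, mem_range] at hk ⊢
  omega

lemma abs_sum_range_mul_dirichletKernel_le {t : ℝ} (ht₀ : 0 < t) (htπ : t ≤ π)
    (a : ℕ → ℝ) (M : ℕ) :
    |∑ k ∈ range M, a k * dirichletKernel t k| ≤
      (|a (M - 1)| + ∑ k ∈ range M, |a k - a (k + 1)|) * (π ^ 2 / (2 * t ^ 2)) := by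
  have hG := abs_sum_range_dirichletKernel_le ht₀ htπ
  have hAbel := norm_sum_range_smul_le_of_norm_sum_range_le a (z := dirichletKernel t)
    (by simpa only [Real.norm_eq_abs] using hG) M
  simp only [Real.norm_eq_abs, smul_eq_mul] at hAbel
  refine hAbel.trans (mul_le_mul_of_nonneg_right (add_le_add_right ?_ _)
    ((abs_nonneg _).trans (hG 0)))
  exact sum_le_sum_of_subset_of_nonneg (range_subset_range.mpr (Nat.sub_le M 1))
    fun _ _ _ => abs_nonneg _

lemma abs_sum_mul_dirichletKernel_le_of_nonneg {t : ℝ} (ht₀ : 0 < t) (htπ : t ≤ π)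
    {a : ℕ → ℝ} {s : Finset ℕ} (ha : ∀ k ∈ s, 0 ≤ a k) :
    |∑ k ∈ s, a k * dirichletKernel t k| ≤ π / (2 * t) * ∑ k ∈ s, a k := by
  rw [mul_sum]
  refine (abs_sum_le_sum_abs _ _).trans (sum_le_sum fun k hk => ?_)
  rw [abs_mul, abs_of_nonneg (ha k hk), mul_comm]
  exact mul_le_mul_of_nonneg_right (abs_dirichletKernel_le ht₀ htπ k) (ha k hk)

lemma mul_add_sum_range_abs_sub_succ_le {K : ℝ} (hK : 0 ≤ K) {a : ℕ → ℝ} {n τ : ℕ}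
    (hτ : 2 * τ ≤ n) (ha : ∀ k ≤ n, 0 ≤ a k)
    (hbv : ∑ k ∈ range (n - τ), |a k - a (k + 1)| ≤
      K / (τ + 1) * ∑ k ∈ Icc (n - τ) n, a k) :
    (τ + 1) * (a (n - τ - 1) + ∑ k ∈ range (n - τ), |a k - a (k + 1)|) ≤
      (1 + 2 * K) * ∑ k ∈ Icc (n - 2 * τ) n, a k := by
  set V := ∑ k ∈ range (n - τ), |a k - a (k + 1)|
  set S := ∑ k ∈ Icc (n - 2 * τ) n, a k
  have hsub : ∀ {l r : ℕ}, n - 2 * τ ≤ l → r ≤ n → ∑ k ∈ Icc l r, a k ≤ S := fun hl hr =>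
    sum_le_sum_of_subset_of_nonneg (Icc_subset_Icc hl hr)
      fun k hk _ => ha k (mem_Icc.mp hk).2
  have hV : (τ + 1) * V ≤ K * S := by
    calc (τ + 1) * V ≤ (τ + 1) * (K / (τ + 1) * ∑ k ∈ Icc (n - τ) n, a k) := by gcongr
      _ = K * ∑ k ∈ Icc (n - τ) n, a k := by field_simp
      _ ≤ K * S := by gcongr; exact hsub (by omega) le_rfl
  have hlast : (τ + 1) * a (n - τ - 1) ≤ S + (τ + 1) * V := by
    have hcard : #(Icc (n - 2 * τ) (n - τ)) = τ + 1 := by rw [Nat.card_Icc]; omega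
    have hle : ∀ j ∈ Icc (n - 2 * τ) (n - τ), a (n - τ - 1) ≤ a j + V := fun j hj => by
      have := abs_sub_le_sum_range_abs_sub_succ a (by omega : n - τ - 1 ≤ n - τ)
        (mem_Icc.mp hj).2
      linarith [le_abs_self (a (n - τ - 1) - a j)]
    have := sum_le_sum hle
    rw [sum_add_distrib, sum_const, sum_const, hcard, nsmul_eq_mul, nsmul_eq_mul] at this
    push_cast at this
    linarith [hsub (l := n - 2 * τ) (r := n - τ) le_rfl (by omega)]
  linarith

lemma abs_sum_mul_dirichletKernel_le_of_mhbvs {K t : ℝ} (hK : 0 ≤ K) (ht₀ : 0 < t)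
    (htπ : t ≤ π) {a : ℕ → ℝ} {n τ : ℕ} (hτ : 2 * τ ≤ n) (hπτ : π ≤ t * (τ + 1))
    (ha : ∀ k ≤ n, 0 ≤ a k)
    (hbv : ∑ k ∈ range (n - τ), |a k - a (k + 1)| ≤
      K / (τ + 1) * ∑ k ∈ Icc (n - τ) n, a k) :
    |∑ k ∈ range (n + 1), a k * dirichletKernel t k| ≤
      π * (1 + K) * t⁻¹ * ∑ k ∈ Icc (n - 2 * τ) n, a k := by
  set S := ∑ k ∈ Icc (n - 2 * τ) n, a k
  set A := a (n - τ - 1) + ∑ k ∈ range (n - τ), |a k - a (k + 1)|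
  have hA₀ : 0 ≤ A := add_nonneg (ha _ (by omega)) (sum_nonneg fun _ _ => abs_nonneg _)
  have hA : A * π ≤ (1 + 2 * K) * S * t := calc
    A * π ≤ A * (t * (τ + 1)) := by gcongr
    _ = t * ((τ + 1) * A) := by ring
    _ ≤ t * ((1 + 2 * K) * S) :=
      mul_le_mul_of_nonneg_left (mul_add_sum_range_abs_sub_succ_le hK hτ ha hbv) ht₀.le
    _ = (1 + 2 * K) * S * t := by ring
  have hhead := abs_sum_range_mul_dirichletKernel_le ht₀ htπ a (n - τ)
  rw [abs_of_nonneg (ha _ (by omega))] at hhead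
  have htail : |∑ k ∈ Ico (n - τ) (n + 1), a k * dirichletKernel t k| ≤ π / (2 * t) * S := by
    refine (abs_sum_mul_dirichletKernel_le_of_nonneg ht₀ htπ
      fun k hk => ha k (by rw [mem_Ico] at hk; omega)).trans ?_
    gcongr
    exact sum_le_sum_of_subset_of_nonneg (fun k hk => by rw [mem_Ico] at hk; rw [mem_Icc]; omega)
      fun k hk _ => ha k (mem_Icc.mp hk).2
  rw [← sum_range_add_sum_Ico _ (by omega : n - τ ≤ n + 1)]
  calc _ ≤ A * (π ^ 2 / (2 * t ^ 2)) + π / (2 * t) * S :=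
        (abs_add_le _ _).trans (add_le_add hhead htail)
    _ = A * π * (π / (2 * t ^ 2)) + π / (2 * t) * S := by ring
    _ ≤ (1 + 2 * K) * S * t * (π / (2 * t ^ 2)) + π / (2 * t) * S := by gcongr
    _ = π * (1 + K) * t⁻¹ * S := by field_simp; ring

lemma floor_pi_div_bounds {n : ℕ} {t : ℝ} (hn : 0 < n) (ht : 2 * π / n ≤ t) :
    0 < t ∧ 2 * ⌊π / t⌋₊ ≤ n ∧ π ≤ t * (⌊π / t⌋₊ + 1) := by
  have ht₀ : 0 < t := lt_of_lt_of_le (by positivity) ht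
  have hfloor : (⌊π / t⌋₊ : ℝ) * t ≤ π := (le_div_iff₀ ht₀).mp (Nat.floor_le (by positivity))
  refine ⟨ht₀, ?_, ?_⟩
  · rw [div_le_iff₀ (by positivity)] at ht
    exact_mod_cast (by nlinarith : (2 * ⌊π / t⌋₊ : ℝ) ≤ n)
  · have := (div_lt_iff₀ ht₀).mp (Nat.lt_floor_add_one (π / t))
    linarith

/-- Lemma 2 (MHBVS case): for `2π/n ≤ t ≤ π` and an MHBVS row `(a k)`,
`|∑_{k=0}^n a_k D_k(t)| ≤ C · t⁻¹ · ∑_{k=n-2τ}^n a_k` with `τ = ⌊π/t⌋`. -/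
theorem dirichlet_mean_bound_mhbvs (K : ℝ) (hK : 0 ≤ K) :
    ∃ C : ℝ, ∀ (n : ℕ) (a : ℕ → ℝ) (t : ℝ), 2 ≤ n →
      (∀ k ≤ n, 0 ≤ a k) →
      (∀ m : ℕ, m < n →
        ∑ k ∈ Finset.range (n - m), |a k - a (k + 1)| ≤
          K / (m + 1) * ∑ k ∈ Finset.Icc (n - m) n, a k) →
      2 * π / n ≤ t → t ≤ π →
      |∑ k ∈ Finset.range (n + 1),
          a k * (1 / 2 + ∑ ν ∈ Finset.Icc 1 k, Real.cos (ν * t))| ≤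
        C * t⁻¹ * ∑ k ∈ Finset.Icc (n - 2 * ⌊π / t⌋₊) n, a k := by
  refine ⟨π * (1 + K), fun n a t hn ha hbv ht htπ => ?_⟩
  obtain ⟨ht₀, hτ, hπτ⟩ := floor_pi_div_bounds (by omega) ht
  exact_mod_cast abs_sum_mul_dirichletKernel_le_of_mhbvs hK ht₀ htπ hτ hπτ ha
    (hbv _ (by omega))
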